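/- Let C be a real symmetric positive definite n×n matrix with unit diagonal, let b⁽¹⁾, …, b⁽ˢ⁾ ∈ ℝⁿ, and let k ≥ 1 with 2k ≤ n. Let D ⊆ {1,…,n}, and for each j let S_j ⊆ D with |S_j| = min(k,|D|) be a set produced by the Orthogonal Matching Pursuit greedy rule within D for target j (starting from ∅, each step adds the m ∈ D not yet selected maximizing |b⁽ʲ⁾_m − C_{m,T} (C_T)⁻¹ b⁽ʲ⁾_T| where T is the current set). Define F_OMP(D) := Σ_j R²_j(S_j) and F̂(D) := Σ_j max over S ⊆ D with |S| ≤ k of Σ_{i∈S} (b⁽ʲ⁾_i)². Suppose γ > 0 satisfies Σ_{i∈S} (b⁽ʲ⁾_i)² ≥ γ · R²_j(S) for every j and every S with |S| ≤ k. Then ((1 − e^{−λmin(C,2k)²}) / λmax(C,k)) · F̂(D) ≤ F_OMP(D) ≤ F̂(D)/γ. -/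

import Mathlib

open scoped Matrix

/-- The smallest eigenvalue of a real symmetric (Hermitian) matrix. -/
noncomputable def lambdaMin {m : Type*} [Fintype m] [DecidableEq m] (A : Matrix m m ℝ) : ℝ :=
  if hA : A.IsHermitian then ⨅ i, hA.eigenvalues i else 0

/-- The largest eigenvalue of a real symmetric (Hermitian) matrix. -/
noncomputable def lambdaMax {m : Type*} [Fintype m] [DecidableEq m] (A : Matrix m m ℝ) : ℝ :=
  if hA : A.IsHermitian then ⨆ i, hA.eigenvalues i else 0

/-- The principal submatrix of `C` on rows and columns in `S`. -/
def subMat {ι : Type*} (C : Matrix ι ι ℝ) (S : Finset ι) : Matrix S S ℝ :=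
  fun i j => C i j

/-- `R²(S) = b_Sᵀ (C_S)⁻¹ b_S`, the squared multiple correlation. -/
noncomputable def R2 {ι : Type*} [Fintype ι] [DecidableEq ι]
    (C : Matrix ι ι ℝ) (b : ι → ℝ) (S : Finset ι) : ℝ :=
  (fun i : S => b i) ⬝ᵥ (subMat C S)⁻¹ *ᵥ (fun i : S => b i)

/-- `λmin(C,k)`: the smallest eigenvalue of any `k × k` principal submatrix of `C`. -/
noncomputable def lambdaMinK {n : ℕ} (C : Matrix (Fin n) (Fin n) ℝ) (k : ℕ) : ℝ :=
  sInf {x | ∃ S : Finset (Fin n), S.card = k ∧ x = lambdaMin (subMat C S)}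

/-- `λmax(C,k)`: the largest eigenvalue of any `k × k` principal submatrix of `C`. -/
noncomputable def lambdaMaxK {n : ℕ} (C : Matrix (Fin n) (Fin n) ℝ) (k : ℕ) : ℝ :=
  sSup {x | ∃ S : Finset (Fin n), S.card = k ∧ x = lambdaMax (subMat C S)}

/-- `Cov(Res(Z|S), X_m) = b_m - C_{m,S} (C_S)⁻¹ b_S`. -/
noncomputable def resCov {ι : Type*} [Fintype ι] [DecidableEq ι]
    (C : Matrix ι ι ℝ) (b : ι → ℝ) (S : Finset ι) (m : ι) : ℝ :=
  b m - (fun i : S => C m i) ⬝ᵥ ((subMat C S)⁻¹ *ᵥ (fun i : S => b i))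

/-- `T` is a run of the Orthogonal Matching Pursuit greedy rule within the dictionary
`D` (for target covariances `b`), run for `min(k,|D|)` steps. -/
def IsOMPChain {n : ℕ} (C : Matrix (Fin n) (Fin n) ℝ) (b : Fin n → ℝ)
    (D : Finset (Fin n)) (k : ℕ) (T : ℕ → Finset (Fin n)) : Prop :=
  T 0 = ∅ ∧
    ∀ i < min k D.card, ∃ m ∈ D, m ∉ T i ∧ T (i + 1) = insert m (T i) ∧
      ∀ x ∈ D, x ∉ T i → |resCov C b (T i) x| ≤ |resCov C b (T i) m|

/-- The modular approximation objective
`F̂(D) = Σ_j max_{S ⊆ D, |S| ≤ k} Σ_{i∈S} (b⁽ʲ⁾_i)²`. -/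
noncomputable def Fma {n s : ℕ} (bs : Fin s → Fin n → ℝ) (k : ℕ)
    (D : Finset (Fin n)) : ℝ :=
  ∑ j, sSup {x | ∃ S ⊆ D, S.card ≤ k ∧ x = ∑ i ∈ S, (bs j i) ^ 2}

/-!
`R²(S)` is the maximum of `2⟨α, b⟩ - αᵀCα` over the coefficient vectors `α` supported in `S`,
attained at the regression coefficients. Testing it with `α = b_S / λmax(C,k)` gives
`∑_{i∈S} b_i² ≤ λmax(C,k) R²(S)`, and perturbing the regression coefficients on `T` along `e_m`
shows that adding `m` to `T` gains at least `resCov(T,m)²`. Conversely, since the quadratic form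
is at least `λ = λmin(C,2k)` times the squared norm on vectors supported in `S ∪ T`,
`R²(S) - R²(T) ≤ ∑_{x ∈ S \ T} resCov(T,x)² / λ ≤ k resCov(T,m)² / λ` for the greedy choice `m`.
Hence each OMP step shrinks the gap to any `k`-subset `S ⊆ D` by the factor `1 - λ/k`, and after
`k` steps it is at most `e^{-λ} R²(S) ≤ e^{-λ²} R²(S)` (the unit diagonal forces `λ ≤ 1`).
The upper bound is the definition of `γ`.
-/

open Finset

section Spectral

variable {m : Type*} [Fintype m] [DecidableEq m] {A : Matrix m m ℝ}

theorem Matrix.IsHermitian.exists_dotProduct_mulVec_eq_sum (hA : A.IsHermitian) (x : m → ℝ) :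
    ∃ y : m → ℝ, x ⬝ᵥ A *ᵥ x = ∑ i, hA.eigenvalues i * y i ^ 2 ∧ x ⬝ᵥ x = ∑ i, y i ^ 2 := by
  set U : Matrix m m ℝ := (hA.eigenvectorUnitary : Matrix m m ℝ)
  have hUt : star U = Uᵀ := Matrix.conjTranspose_eq_transpose_of_trivial U
  have hUU : U * Uᵀ = 1 := hUt ▸ Matrix.mem_unitaryGroup_iff.mp hA.eigenvectorUnitary.2
  have hUU' : Uᵀ * U = 1 := hUt ▸ Matrix.mem_unitaryGroup_iff'.mp hA.eigenvectorUnitary.2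
  refine ⟨Uᵀ *ᵥ x, ?_, ?_⟩
  · conv_lhs => rw [hA.spectral_theorem, Unitary.conjStarAlgAut_apply]
    rw [← Matrix.mulVec_mulVec, ← Matrix.mulVec_mulVec, hUt, Matrix.dotProduct_mulVec,
      ← Matrix.mulVec_transpose]
    simp [U, dotProduct, Matrix.mulVec_diagonal, sq, mul_left_comm]
  · conv_lhs => rw [← Matrix.one_mulVec x, ← hUU, ← Matrix.mulVec_mulVec]
    rw [Matrix.dotProduct_mulVec, ← Matrix.mulVec_transpose, Matrix.mulVec_mulVec, hUU',
      Matrix.one_mulVec]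
    simp [dotProduct, sq]

theorem lambdaMin_mul_dotProduct_le [Nonempty m] (hA : A.IsHermitian) (x : m → ℝ) :
    lambdaMin A * (x ⬝ᵥ x) ≤ x ⬝ᵥ A *ᵥ x := by
  obtain ⟨y, hAx, hx⟩ := hA.exists_dotProduct_mulVec_eq_sum x
  rw [hAx, hx, mul_sum, lambdaMin, dif_pos hA]
  exact sum_le_sum fun i _ => mul_le_mul_of_nonneg_right
    (ciInf_le (Set.finite_range _).bddBelow i) (sq_nonneg _)

theorem dotProduct_mulVec_le_lambdaMax_mul [Nonempty m] (hA : A.IsHermitian) (x : m → ℝ) :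
    x ⬝ᵥ A *ᵥ x ≤ lambdaMax A * (x ⬝ᵥ x) := by
  obtain ⟨y, hAx, hx⟩ := hA.exists_dotProduct_mulVec_eq_sum x
  rw [hAx, hx, mul_sum, lambdaMax, dif_pos hA]
  exact sum_le_sum fun i _ => mul_le_mul_of_nonneg_right
    (le_ciSup (Set.finite_range _).bddAbove i) (sq_nonneg _)

theorem lambdaMin_pos [Nonempty m] (hA : A.PosDef) : 0 < lambdaMin A := by
  obtain ⟨i, hi⟩ := exists_eq_ciInf_of_finite (f := hA.1.eigenvalues)
  rw [lambdaMin, dif_pos hA.1, ← hi]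
  exact hA.eigenvalues_pos i

end Spectral

section Restrict

variable {ι : Type*} [Fintype ι]

theorem dotProduct_eq_dotProduct_restrict (S : Finset ι) {α : ι → ℝ} (β : ι → ℝ)
    (hα : ∀ i ∉ S, α i = 0) :
    α ⬝ᵥ β = (fun i : S => α i) ⬝ᵥ (fun i : S => β i) := by
  rw [dotProduct, ← sum_subset S.subset_univ fun i _ hi => by rw [hα i hi, zero_mul]]
  exact (sum_coe_sort S (fun i => α i * β i)).symm

theorem mulVec_apply_eq_dotProduct_restrict (C : Matrix ι ι ℝ) (S : Finset ι) {β : ι → ℝ}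
    (hβ : ∀ i ∉ S, β i = 0) (x : ι) :
    (C *ᵥ β) x = (fun i : S => C x i) ⬝ᵥ (fun i : S => β i) := by
  rw [Matrix.mulVec, dotProduct_comm, dotProduct_eq_dotProduct_restrict S _ hβ,
    dotProduct_comm]

theorem dotProduct_mulVec_eq_subMat (C : Matrix ι ι ℝ) (S : Finset ι) {α β : ι → ℝ}
    (hα : ∀ i ∉ S, α i = 0) (hβ : ∀ i ∉ S, β i = 0) :
    α ⬝ᵥ C *ᵥ β = (fun i : S => α i) ⬝ᵥ subMat C S *ᵥ (fun i : S => β i) := by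
  rw [dotProduct_eq_dotProduct_restrict S _ hα]
  congr 1
  funext i
  exact mulVec_apply_eq_dotProduct_restrict C S hβ i

theorem Matrix.PosDef.subMat {ι : Type*} {C : Matrix ι ι ℝ} (hC : C.PosDef) (S : Finset ι) :
    (subMat C S).PosDef :=
  hC.submatrix Subtype.val_injective

end Restrict

section QuadGain

variable {ι : Type*} [Fintype ι] (b : ι → ℝ) {C : Matrix ι ι ℝ}

/-- The variance explained by the predictor `∑ αᵢ Xᵢ`, i.e. `Var Z - Var (Z - ∑ αᵢ Xᵢ)`. -/
noncomputable def quadGain (C : Matrix ι ι ℝ) (b α : ι → ℝ) : ℝ :=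
  2 * (α ⬝ᵥ b) - α ⬝ᵥ C *ᵥ α

theorem quadGain_add (hC : C.IsHermitian) (α δ : ι → ℝ) :
    quadGain C b (α + δ) = quadGain C b α + 2 * (δ ⬝ᵥ (b - C *ᵥ α)) - δ ⬝ᵥ C *ᵥ δ := by
  have hsymm : α ⬝ᵥ C *ᵥ δ = δ ⬝ᵥ C *ᵥ α := by
    rw [Matrix.dotProduct_mulVec, ← Matrix.mulVec_transpose,
      (Matrix.conjTranspose_eq_transpose_of_trivial C).symm.trans hC.eq, dotProduct_comm]
  simp only [quadGain, Matrix.mulVec_add, dotProduct_add, add_dotProduct, dotProduct_sub, hsymm]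
  ring

end QuadGain

section Variational

variable {ι : Type*} [DecidableEq ι]

noncomputable def regCoeff (C : Matrix ι ι ℝ) (b : ι → ℝ) (S : Finset ι) : ι → ℝ :=
  fun i => if h : i ∈ S then ((subMat C S)⁻¹ *ᵥ fun j : S => b j) ⟨i, h⟩ else 0

variable (b : ι → ℝ)

theorem regCoeff_of_notMem (C : Matrix ι ι ℝ) {S : Finset ι} :
    ∀ i ∉ S, regCoeff C b S i = 0 :=
  fun _ hi => dif_neg hi

theorem regCoeff_restrict (C : Matrix ι ι ℝ) (S : Finset ι) :
    (fun i : S => regCoeff C b S i) = (subMat C S)⁻¹ *ᵥ fun j : S => b j :=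
  funext fun i => dif_pos i.2

theorem subMat_mulVec_inv_mulVec {C : Matrix ι ι ℝ} (hC : C.PosDef) (S : Finset ι)
    (v : S → ℝ) :
    subMat C S *ᵥ ((subMat C S)⁻¹ *ᵥ v) = v := by
  rw [Matrix.mulVec_mulVec, Matrix.mul_nonsing_inv _ (hC.subMat S).det_pos.ne'.isUnit,
    Matrix.one_mulVec]

variable [Fintype ι] {C : Matrix ι ι ℝ}

theorem resCov_eq_sub_mulVec_regCoeff (S : Finset ι) (x : ι) :
    resCov C b S x = b x - (C *ᵥ regCoeff C b S) x := by
  rw [mulVec_apply_eq_dotProduct_restrict C S (regCoeff_of_notMem b C), regCoeff_restrict, resCov]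

theorem resCov_eq_zero_of_mem (hC : C.PosDef) {S : Finset ι} {x : ι} (hx : x ∈ S) :
    resCov C b S x = 0 := by
  rw [resCov, sub_eq_zero]
  exact (congrFun (subMat_mulVec_inv_mulVec hC S fun j : S => b j) ⟨x, hx⟩).symm

theorem quadGain_regCoeff (hC : C.PosDef) (S : Finset ι) :
    quadGain C b (regCoeff C b S) = R2 C b S := by
  have hsupp := regCoeff_of_notMem b C (S := S)
  rw [quadGain, dotProduct_eq_dotProduct_restrict S b hsupp,
    dotProduct_mulVec_eq_subMat C S hsupp hsupp, regCoeff_restrict,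
    subMat_mulVec_inv_mulVec hC, R2, dotProduct_comm]
  ring

theorem quadGain_le_R2 (hC : C.PosDef) {S : Finset ι} {α : ι → ℝ} (hα : ∀ i ∉ S, α i = 0) :
    quadGain C b α ≤ R2 C b S := by
  set δ := α - regCoeff C b S
  have hcross : δ ⬝ᵥ (b - C *ᵥ regCoeff C b S) = 0 := by
    refine sum_eq_zero fun i _ => ?_
    by_cases hi : i ∈ S
    · rw [Pi.sub_apply, ← resCov_eq_sub_mulVec_regCoeff, resCov_eq_zero_of_mem b hC hi,
        mul_zero]
    · simp [δ, hα i hi, regCoeff_of_notMem b C i hi]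
  have hδ : 0 ≤ δ ⬝ᵥ C *ᵥ δ := hC.posSemidef.dotProduct_mulVec_nonneg δ
  calc quadGain C b α = quadGain C b (regCoeff C b S + δ) := by simp [δ]
    _ = R2 C b S - δ ⬝ᵥ C *ᵥ δ := by
      rw [quadGain_add b hC.1, hcross, quadGain_regCoeff b hC]; ring
    _ ≤ R2 C b S := by linarith

theorem R2_empty (C : Matrix ι ι ℝ) : R2 C b ∅ = 0 := by
  simp [R2, dotProduct]

theorem R2_nonneg (hC : C.PosDef) (S : Finset ι) : 0 ≤ R2 C b S := by
  simpa [quadGain] using quadGain_le_R2 b hC (S := S) (α := 0) fun _ _ => rfl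

theorem R2_mono (hC : C.PosDef) {S S' : Finset ι} (h : S ⊆ S') : R2 C b S ≤ R2 C b S' := by
  rw [← quadGain_regCoeff b hC S]
  exact quadGain_le_R2 b hC fun i hi => regCoeff_of_notMem b C i fun hS => hi (h hS)

theorem R2_add_resCov_sq_div_le (hC : C.PosDef) (S : Finset ι) (m : ι) :
    R2 C b S + resCov C b S m ^ 2 / C m m ≤ R2 C b (insert m S) := by
  set r := resCov C b S m
  have hm : C m m ≠ 0 := hC.diag_pos.ne'
  set δ : ι → ℝ := Pi.single m (r / C m m)
  have hsupp : ∀ i ∉ insert m S, (regCoeff C b S + δ) i = 0 := by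
    intro i hi
    rw [mem_insert, not_or] at hi
    simp [δ, regCoeff_of_notMem b C i hi.2, Pi.single_eq_of_ne hi.1]
  have hcross : δ ⬝ᵥ (b - C *ᵥ regCoeff C b S) = r / C m m * r := by
    rw [single_dotProduct, Pi.sub_apply, ← resCov_eq_sub_mulVec_regCoeff]
  have hquad : δ ⬝ᵥ C *ᵥ δ = (r / C m m) ^ 2 * C m m := by
    rw [Matrix.mulVec_single, single_dotProduct]
    simp only [Pi.smul_apply, Matrix.col_apply, MulOpposite.smul_eq_mul_unop,
      MulOpposite.unop_op]
    ring
  calc R2 C b S + r ^ 2 / C m m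
      = quadGain C b (regCoeff C b S + δ) := by
        rw [quadGain_add b hC.1, hcross, hquad, quadGain_regCoeff b hC]
        field_simp
        ring
    _ ≤ R2 C b (insert m S) := quadGain_le_R2 b hC hsupp

theorem R2_le_R2_add_sum_resCov_sq_div (hC : C.PosDef) {T U : Finset ι} (hTU : T ⊆ U)
    {lam : ℝ} (hlam : 0 < lam)
    (hquad : ∀ α : ι → ℝ, (∀ i ∉ U, α i = 0) → lam * (α ⬝ᵥ α) ≤ α ⬝ᵥ C *ᵥ α) :
    R2 C b U ≤ R2 C b T + ∑ x ∈ U \ T, resCov C b T x ^ 2 / lam := by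
  have hρ : b - C *ᵥ regCoeff C b T = resCov C b T :=
    funext fun x => (resCov_eq_sub_mulVec_regCoeff b T x).symm
  set δ := regCoeff C b U - regCoeff C b T
  have hδ : ∀ i ∉ U, δ i = 0 := fun i hi => by
    simp [δ, regCoeff_of_notMem b C i hi, regCoeff_of_notMem b C i fun h => hi (hTU h)]
  -- AM-GM coordinatewise, using that `resCov C b T` vanishes on `T` and `δ` outside `U`
  have hpoint : ∀ x, 2 * (δ x * resCov C b T x) - lam * (δ x * δ x) ≤
      if x ∈ U \ T then resCov C b T x ^ 2 / lam else 0 := by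
    intro x
    split_ifs with hx
    · rw [le_div_iff₀ hlam]
      nlinarith [sq_nonneg (lam * δ x - resCov C b T x)]
    · by_cases hxU : x ∈ U
      · rw [resCov_eq_zero_of_mem b hC (by simpa [hxU] using hx)]
        nlinarith [mul_self_nonneg (δ x)]
      · simp [hδ x hxU]
  have hsum : 2 * (δ ⬝ᵥ resCov C b T) - lam * (δ ⬝ᵥ δ) ≤
      ∑ x ∈ U \ T, resCov C b T x ^ 2 / lam := by
    have := sum_le_sum fun x (_ : x ∈ univ) => hpoint x
    rwa [sum_ite_mem, univ_inter, sum_sub_distrib, ← mul_sum, ← mul_sum] at this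
  calc R2 C b U = quadGain C b (regCoeff C b T + δ) := by
        rw [add_sub_cancel, quadGain_regCoeff b hC]
    _ = R2 C b T + 2 * (δ ⬝ᵥ resCov C b T) - δ ⬝ᵥ C *ᵥ δ := by
        rw [quadGain_add b hC.1, quadGain_regCoeff b hC, hρ]
    _ ≤ R2 C b T + ∑ x ∈ U \ T, resCov C b T x ^ 2 / lam := by
        linarith [hquad δ hδ]

end Variational

section SparseEigenvalues

variable {n k : ℕ} {C : Matrix (Fin n) (Fin n) ℝ}

theorem lambdaMinK_le_lambdaMin {S : Finset (Fin n)} (hS : #S = k) :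
    lambdaMinK C k ≤ lambdaMin (subMat C S) :=
  csInf_le ((Set.finite_range fun S => lambdaMin (subMat C S)).subset
    (by rintro _ ⟨S, -, rfl⟩; exact ⟨S, rfl⟩)).bddBelow ⟨S, hS, rfl⟩

theorem lambdaMax_le_lambdaMaxK {S : Finset (Fin n)} (hS : #S = k) :
    lambdaMax (subMat C S) ≤ lambdaMaxK C k :=
  le_csSup ((Set.finite_range fun S => lambdaMax (subMat C S)).subset
    (by rintro _ ⟨S, -, rfl⟩; exact ⟨S, rfl⟩)).bddAbove ⟨S, hS, rfl⟩

theorem lambdaMinK_pos (hC : C.PosDef) (hk0 : 0 < k) (hkn : k ≤ n) : 0 < lambdaMinK C k := by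
  obtain ⟨S₀, -, hS₀⟩ := exists_subset_card_eq (show k ≤ #(univ : Finset (Fin n)) by simpa)
  obtain ⟨S, hS, hmin⟩ : lambdaMinK C k ∈ _ :=
    Set.Nonempty.csInf_mem ⟨_, S₀, hS₀, rfl⟩
      ((Set.finite_range fun S => lambdaMin (subMat C S)).subset
        (by rintro _ ⟨S, -, rfl⟩; exact ⟨S, rfl⟩))
  have : Nonempty S := (card_pos.mp (hS ▸ hk0)).to_subtype
  exact hmin ▸ lambdaMin_pos (hC.subMat S)

theorem lambdaMinK_mul_dotProduct_le (hC : C.PosDef) (hk0 : 0 < k) (hkn : k ≤ n)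
    {U : Finset (Fin n)} (hU : #U ≤ k) {α : Fin n → ℝ} (hα : ∀ i ∉ U, α i = 0) :
    lambdaMinK C k * (α ⬝ᵥ α) ≤ α ⬝ᵥ C *ᵥ α := by
  obtain ⟨W, hUW, -, hW⟩ := exists_subsuperset_card_eq (subset_univ U) hU (by simpa using hkn)
  have hαW : ∀ i ∉ W, α i = 0 := fun i hi => hα i fun h => hi (hUW h)
  have : Nonempty W := (card_pos.mp (hW ▸ hk0)).to_subtype
  rw [dotProduct_mulVec_eq_subMat C W hαW hαW, dotProduct_eq_dotProduct_restrict W α hαW]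
  exact (mul_le_mul_of_nonneg_right (lambdaMinK_le_lambdaMin hW)
    (dotProduct_self_star_nonneg _)).trans (lambdaMin_mul_dotProduct_le (hC.subMat W).1 _)

theorem dotProduct_mulVec_le_lambdaMaxK_mul (hC : C.PosDef) (hk0 : 0 < k) (hkn : k ≤ n)
    {U : Finset (Fin n)} (hU : #U ≤ k) {α : Fin n → ℝ} (hα : ∀ i ∉ U, α i = 0) :
    α ⬝ᵥ C *ᵥ α ≤ lambdaMaxK C k * (α ⬝ᵥ α) := by
  obtain ⟨W, hUW, -, hW⟩ := exists_subsuperset_card_eq (subset_univ U) hU (by simpa using hkn)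
  have hαW : ∀ i ∉ W, α i = 0 := fun i hi => hα i fun h => hi (hUW h)
  have : Nonempty W := (card_pos.mp (hW ▸ hk0)).to_subtype
  rw [dotProduct_mulVec_eq_subMat C W hαW hαW, dotProduct_eq_dotProduct_restrict W α hαW]
  exact (dotProduct_mulVec_le_lambdaMax_mul (hC.subMat W).1 _).trans
    (mul_le_mul_of_nonneg_right (lambdaMax_le_lambdaMaxK hW) (dotProduct_self_star_nonneg _))

theorem lambdaMinK_le_one (hC : C.PosDef) (hdiag : ∀ i, C i i = 1) (hk0 : 0 < k)
    (hkn : k ≤ n) : lambdaMinK C k ≤ 1 := by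
  set x : Fin n := ⟨0, hk0.trans_le hkn⟩
  have h := lambdaMinK_mul_dotProduct_le hC hk0 hkn (U := {x})
    ((card_singleton x).trans_le hk0) (α := Pi.single x 1)
    fun i hi => Pi.single_eq_of_ne (by simpa using hi) _
  simpa [hdiag] using h

theorem lambdaMaxK_pos (hC : C.PosDef) (hk0 : 0 < k) (hkn : k ≤ n) : 0 < lambdaMaxK C k := by
  set x : Fin n := ⟨0, hk0.trans_le hkn⟩
  have h := dotProduct_mulVec_le_lambdaMaxK_mul hC hk0 hkn (U := {x})
    ((card_singleton x).trans_le hk0) (α := Pi.single x 1)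
    fun i hi => Pi.single_eq_of_ne (by simpa using hi) _
  simp only [single_dotProduct, Matrix.mulVec_single_one, one_mul] at h
  simpa using hC.diag_pos.trans_le h

end SparseEigenvalues

section Greedy

variable {n k : ℕ} {C : Matrix (Fin n) (Fin n) ℝ} {b : Fin n → ℝ}

theorem IsOMPChain.subset_and_card_eq {D : Finset (Fin n)} {T : ℕ → Finset (Fin n)}
    (hT : IsOMPChain C b D k T) {i : ℕ} (hi : i ≤ min k #D) : T i ⊆ D ∧ #(T i) = i := by
  induction i with
  | zero => simp [hT.1]
  | succ i ih =>
    obtain ⟨hsub, hcard⟩ := ih (by omega)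
    obtain ⟨m, hmD, hmT, hTsucc, -⟩ := hT.2 i (by omega)
    rw [hTsucc, card_insert_of_notMem hmT, hcard]
    exact ⟨insert_subset hmD hsub, rfl⟩

theorem R2_sub_R2_insert_le (hC : C.PosDef) (hk0 : 0 < k) {S T : Finset (Fin n)} (hS : #S ≤ k)
    {m : Fin n} (hm : C m m = 1) (hmax : ∀ x ∈ S, x ∉ T → |resCov C b T x| ≤ |resCov C b T m|)
    {lam : ℝ} (hlam : 0 < lam)
    (hquad : ∀ α : Fin n → ℝ, (∀ i ∉ S ∪ T, α i = 0) → lam * (α ⬝ᵥ α) ≤ α ⬝ᵥ C *ᵥ α) :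
    R2 C b S - R2 C b (insert m T) ≤ (1 - lam / k) * (R2 C b S - R2 C b T) := by
  set r := resCov C b T m
  have hsum : ∑ x ∈ (S ∪ T) \ T, resCov C b T x ^ 2 / lam ≤ k * r ^ 2 / lam := by
    rw [union_sdiff_right, ← sum_div]
    gcongr
    calc ∑ x ∈ S \ T, resCov C b T x ^ 2 ≤ #(S \ T) • r ^ 2 := by
          refine sum_le_card_nsmul _ _ _ fun x hx => ?_
          rw [mem_sdiff] at hx
          exact sq_le_sq.mpr (hmax x hx.1 hx.2)
      _ ≤ k * r ^ 2 := by
          rw [nsmul_eq_mul]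
          gcongr
          exact_mod_cast (card_le_card sdiff_subset).trans hS
  have hgap : R2 C b S - R2 C b T ≤ k * r ^ 2 / lam :=
    calc R2 C b S - R2 C b T ≤ R2 C b (S ∪ T) - R2 C b T := by
          gcongr; exact R2_mono b hC subset_union_left
      _ ≤ k * r ^ 2 / lam := by
          linarith [R2_le_R2_add_sum_resCov_sq_div b hC subset_union_right hlam hquad]
  have hgain : R2 C b T + r ^ 2 ≤ R2 C b (insert m T) := by
    simpa [hm] using R2_add_resCov_sq_div_le b hC T m
  have hfrac : lam / k * (R2 C b S - R2 C b T) ≤ r ^ 2 :=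
    calc lam / k * (R2 C b S - R2 C b T) ≤ lam / k * (k * r ^ 2 / lam) := by gcongr
      _ = r ^ 2 := by field_simp
  linarith

theorem IsOMPChain.R2_sub_le_pow {D : Finset (Fin n)} {T : ℕ → Finset (Fin n)}
    (hT : IsOMPChain C b D k T) (hC : C.PosDef) (hdiag : ∀ i, C i i = 1) (hk0 : 0 < k)
    (h2k : 2 * k ≤ n) {S : Finset (Fin n)} (hSD : S ⊆ D) (hS : #S ≤ k) {i : ℕ}
    (hi : i ≤ min k #D) :
    R2 C b S - R2 C b (T i) ≤ (1 - lambdaMinK C (2 * k) / k) ^ i * R2 C b S := by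
  set lam := lambdaMinK C (2 * k)
  have hlam : 0 < lam := lambdaMinK_pos hC (by omega) h2k
  have hfrac : 0 ≤ 1 - lam / k := by
    rw [sub_nonneg, div_le_one (by positivity)]
    exact (lambdaMinK_le_one hC hdiag (by omega) h2k).trans (by exact_mod_cast hk0)
  induction i with
  | zero => simp [hT.1, R2_empty]
  | succ i ih =>
    obtain ⟨m, hmD, -, hTsucc, hmax⟩ := hT.2 i (by omega)
    have hcard : #(S ∪ T i) ≤ 2 * k := by
      have := card_union_le S (T i)
      have := (hT.subset_and_card_eq (i := i) (by omega)).2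
      omega
    have hquad := fun α => lambdaMinK_mul_dotProduct_le (α := α) hC (by omega) h2k hcard
    calc R2 C b S - R2 C b (T (i + 1)) ≤ (1 - lam / k) * (R2 C b S - R2 C b (T i)) := by
          rw [hTsucc]
          exact R2_sub_R2_insert_le hC hk0 hS (hdiag m) (fun x hx => hmax x (hSD hx)) hlam hquad
      _ ≤ (1 - lam / k) * ((1 - lam / k) ^ i * R2 C b S) := by gcongr; exact ih (by omega)
      _ = (1 - lam / k) ^ (i + 1) * R2 C b S := by ring

theorem IsOMPChain.one_sub_exp_mul_R2_le {D : Finset (Fin n)} {T : ℕ → Finset (Fin n)}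
    (hT : IsOMPChain C b D k T) (hC : C.PosDef) (hdiag : ∀ i, C i i = 1) (hk0 : 0 < k)
    (h2k : 2 * k ≤ n) {S : Finset (Fin n)} (hSD : S ⊆ D) (hS : #S ≤ k) :
    (1 - Real.exp (-(lambdaMinK C (2 * k)) ^ 2)) * R2 C b S ≤ R2 C b (T (min k #D)) := by
  set lam := lambdaMinK C (2 * k)
  have hR2 : 0 ≤ R2 C b S := R2_nonneg b hC S
  rcases le_total k #D with hkD | hDk
  · have hpow := hT.R2_sub_le_pow hC hdiag hk0 h2k hSD hS le_rfl
    rw [min_eq_left hkD] at hpow ⊢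
    have hexp : (1 - lam / k) ^ k ≤ Real.exp (-lam ^ 2) :=
      calc (1 - lam / k) ^ k ≤ Real.exp (-lam) :=
            Real.one_sub_div_pow_le_exp_neg ((lambdaMinK_le_one hC hdiag (by omega) h2k).trans
              (by exact_mod_cast hk0))
        _ ≤ Real.exp (-lam ^ 2) := by
            gcongr
            nlinarith [lambdaMinK_pos hC (by omega) h2k, lambdaMinK_le_one hC hdiag (by omega) h2k]
    nlinarith
  · have hTD : T (min k #D) = D := by
      obtain ⟨hsub, hcard⟩ := hT.subset_and_card_eq le_rfl
      exact eq_of_subset_of_card_le hsub (by omega)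
    rw [hTD]
    nlinarith [R2_mono b hC hSD, Real.exp_pos (-lam ^ 2)]

end Greedy

section Modular

variable {n k : ℕ} {C : Matrix (Fin n) (Fin n) ℝ} {D : Finset (Fin n)} {b : Fin n → ℝ}

theorem one_sub_exp_neg_sq_pos {x : ℝ} (hx : x ≠ 0) : 0 < 1 - Real.exp (-x ^ 2) := by
  rw [sub_pos, Real.exp_lt_one_iff, neg_lt_zero]
  positivity

theorem sum_sq_le_lambdaMaxK_mul_R2 (hC : C.PosDef) (hk0 : 0 < k) (hkn : k ≤ n)
    {S : Finset (Fin n)} (hS : #S ≤ k) :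
    ∑ i ∈ S, b i ^ 2 ≤ lambdaMaxK C k * R2 C b S := by
  set M := lambdaMaxK C k
  have hM : 0 < M := lambdaMaxK_pos hC hk0 hkn
  set p : Fin n → ℝ := fun i => if i ∈ S then b i else 0
  have hp : ∀ i ∉ S, p i = 0 := fun i hi => if_neg hi
  have hpb : p ⬝ᵥ b = ∑ i ∈ S, b i ^ 2 := by
    simp [p, dotProduct, ite_mul, sum_ite_mem, sq]
  have hpp : p ⬝ᵥ p = ∑ i ∈ S, b i ^ 2 := by
    simp [p, dotProduct, ite_mul, sum_ite_mem, sq]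
  have hquad := dotProduct_mulVec_le_lambdaMaxK_mul hC hk0 hkn hS hp
  have hgain := quadGain_le_R2 b hC (S := S) (α := M⁻¹ • p) fun i hi => by simp [hp i hi]
  rw [quadGain, smul_dotProduct, Matrix.mulVec_smul, smul_dotProduct, dotProduct_smul, hpb,
    smul_eq_mul, smul_eq_mul, smul_eq_mul] at hgain
  rw [hpp] at hquad
  have hsecond : M⁻¹ * (M⁻¹ * (p ⬝ᵥ C *ᵥ p)) ≤ M⁻¹ * ∑ i ∈ S, b i ^ 2 := by
    calc M⁻¹ * (M⁻¹ * (p ⬝ᵥ C *ᵥ p)) ≤ M⁻¹ * (M⁻¹ * (M * ∑ i ∈ S, b i ^ 2)) := by gcongr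
      _ = M⁻¹ * ∑ i ∈ S, b i ^ 2 := by field_simp
  calc ∑ i ∈ S, b i ^ 2 = M * (M⁻¹ * ∑ i ∈ S, b i ^ 2) := by field_simp
    _ ≤ M * R2 C b S := by gcongr; linarith

theorem sum_sq_le_sSup {S : Finset (Fin n)} (hSD : S ⊆ D) (hS : #S ≤ k) :
    ∑ i ∈ S, b i ^ 2 ≤ sSup {x | ∃ S ⊆ D, #S ≤ k ∧ x = ∑ i ∈ S, b i ^ 2} :=
  le_csSup ((Set.finite_range fun S : Finset (Fin n) => ∑ i ∈ S, b i ^ 2).subset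
    (by rintro _ ⟨S, -, -, rfl⟩; exact ⟨S, rfl⟩)).bddAbove ⟨S, hSD, hS, rfl⟩

theorem IsOMPChain.one_sub_exp_mul_sSup_le {T : ℕ → Finset (Fin n)} (hT : IsOMPChain C b D k T) (hC : C.PosDef)
    (hdiag : ∀ i, C i i = 1) (hk0 : 0 < k) (h2k : 2 * k ≤ n) :
    (1 - Real.exp (-(lambdaMinK C (2 * k)) ^ 2)) *
        sSup {x | ∃ S ⊆ D, #S ≤ k ∧ x = ∑ i ∈ S, b i ^ 2} ≤
      lambdaMaxK C k * R2 C b (T (min k #D)) := by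
  have hE := one_sub_exp_neg_sq_pos (lambdaMinK_pos hC (by omega) h2k).ne'
  have hM := lambdaMaxK_pos hC hk0 (by omega)
  rw [← le_div_iff₀' hE]
  refine Real.sSup_le ?_ (by have := R2_nonneg b hC (T (min k #D)); positivity)
  rintro _ ⟨S, hSD, hS, rfl⟩
  rw [le_div_iff₀' hE]
  calc (1 - Real.exp (-lambdaMinK C (2 * k) ^ 2)) * ∑ i ∈ S, b i ^ 2
      ≤ (1 - Real.exp (-lambdaMinK C (2 * k) ^ 2)) * (lambdaMaxK C k * R2 C b S) := by
        gcongr; exact sum_sq_le_lambdaMaxK_mul_R2 hC hk0 (by omega) hS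
    _ = lambdaMaxK C k * ((1 - Real.exp (-lambdaMinK C (2 * k) ^ 2)) * R2 C b S) := by ring
    _ ≤ lambdaMaxK C k * R2 C b (T (min k #D)) := by
        gcongr
        exact hT.one_sub_exp_mul_R2_le hC hdiag hk0 h2k hSD hS

end Modular

/-- Sandwiching `F_OMP` between multiples of the modular approximation `F̂`:
`((1 − e^{−λmin(C,2k)²})/λmax(C,k)) F̂(D) ≤ F_OMP(D) ≤ F̂(D)/γ`, where `γ` is a lower
bound on the submodularity ratio of each `R²_j` at the empty set with parameter `k`. -/
theorem fomp_approx_fma {n s k : ℕ}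
    (C : Matrix (Fin n) (Fin n) ℝ) (bs : Fin s → Fin n → ℝ) (hC : C.PosDef)
    (hdiag : ∀ i, C i i = 1) (hk1 : 1 ≤ k) (h2k : 2 * k ≤ n)
    (γ : ℝ) (hγ : 0 < γ)
    (hγsub : ∀ (j : Fin s) (S : Finset (Fin n)), S.card ≤ k →
      γ * R2 C (bs j) S ≤ ∑ i ∈ S, (bs j i) ^ 2)
    (D : Finset (Fin n)) (Sel : Fin s → Finset (Fin n))
    (hSel : ∀ j, ∃ T, IsOMPChain C (bs j) D k T ∧ Sel j = T (min k D.card)) :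
    (1 - Real.exp (-(lambdaMinK C (2 * k)) ^ 2)) / lambdaMaxK C k * Fma bs k D ≤
        ∑ j, R2 C (bs j) (Sel j) ∧
      ∑ j, R2 C (bs j) (Sel j) ≤ Fma bs k D / γ := by
  refine ⟨?_, ?_⟩
  · rw [Fma, mul_sum]
    refine sum_le_sum fun j _ => ?_
    obtain ⟨T, hT, hSelj⟩ := hSel j
    rw [div_mul_eq_mul_div, div_le_iff₀ (lambdaMaxK_pos hC hk1 (by omega)),
      mul_comm _ (lambdaMaxK _ _), hSelj]
    exact hT.one_sub_exp_mul_sSup_le hC hdiag hk1 h2k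
  · rw [Fma, sum_div]
    refine sum_le_sum fun j _ => ?_
    obtain ⟨T, hT, hSelj⟩ := hSel j
    obtain ⟨hsub, hcard⟩ := hT.subset_and_card_eq le_rfl
    rw [le_div_iff₀ hγ, mul_comm, hSelj]
    exact (hγsub j _ (by omega)).trans (sum_sq_le_sSup hsub (by omega))
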